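/- Let G1 and G2 be disjoint Eulerian multigraphs and let G be obtained from them by vertex-identification (identifying one vertex u1 of G1 with one vertex u2 of G2). Then the minimum cycle number satisfies c(G) = c(G1) + c(G2) and the maximum cycle number satisfies ν(G) = ν(G1) + ν(G2). -/

import Mathlib

open scoped Classical

/-- A finite multigraph without loops: a vertex type, an edge type, and an
incidence map assigning to each edge an unordered pair of distinct vertices. -/
structure MGraph where
  V : Type
  E : Type
  finV : Finite V
  finE : Finite E
  ends : E → Sym2 V
  noLoop : ∀ e, ¬ (ends e).IsDiag

namespace MGraph

variable (G : MGraph)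

/-- Degree of a vertex counting only edges in the edge set `F`. -/
noncomputable def degOn (F : Set G.E) (v : G.V) : ℕ := {e | e ∈ F ∧ v ∈ G.ends e}.ncard

/-- Degree of a vertex. -/
noncomputable def deg (v : G.V) : ℕ := G.degOn Set.univ v

/-- Adjacency using only edges from `F`. -/
def AdjOn (F : Set G.E) (a b : G.V) : Prop := ∃ e ∈ F, G.ends e = s(a, b)

/-- Reachability using only edges from `F`. -/
def ReachOn (F : Set G.E) : G.V → G.V → Prop := Relation.ReflTransGen (G.AdjOn F)

/-- Connectivity of a multigraph. -/
def Connected : Prop := Nonempty G.V ∧ ∀ a b : G.V, G.ReachOn Set.univ a b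

/-- A set of edges forms a cycle: it is nonempty, every vertex has degree 0 or 2
in it, and any two of its endpoints are joined by a path inside it. -/
def IsCycle (C : Set G.E) : Prop :=
  C.Nonempty ∧ (∀ v, G.degOn C v = 0 ∨ G.degOn C v = 2) ∧
    ∀ e ∈ C, ∀ f ∈ C, ∀ a b : G.V, a ∈ G.ends e → b ∈ G.ends f → G.ReachOn C a b

/-- A cycle decomposition of the edge set `F`: a set of cycles inside `F` such
that every edge of `F` lies in exactly one of them. -/
def IsCycleDecompOn (F : Set G.E) (D : Set (Set G.E)) : Prop :=
  (∀ C ∈ D, G.IsCycle C ∧ C ⊆ F) ∧ ∀ e ∈ F, ∃! C, C ∈ D ∧ e ∈ C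

/-- A cycle decomposition of the graph. -/
def IsCycleDecomp (D : Set (Set G.E)) : Prop := G.IsCycleDecompOn Set.univ D

/-- Minimum number of cycles in a cycle decomposition of `F`. -/
noncomputable def cOn (F : Set G.E) : ℕ :=
  sInf {n | ∃ D, G.IsCycleDecompOn F D ∧ D.ncard = n}

/-- Maximum number of cycles in a cycle decomposition of `F`. -/
noncomputable def nuOn (F : Set G.E) : ℕ :=
  sSup {n | ∃ D, G.IsCycleDecompOn F D ∧ D.ncard = n}

/-- Minimum cycle number. -/
noncomputable def c : ℕ := G.cOn Set.univ

/-- Maximum cycle number. -/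
noncomputable def nu : ℕ := G.nuOn Set.univ

/-- A multigraph is Eulerian if it admits a closed walk traversing every edge
exactly once. -/
def IsEulerian : Prop :=
  ∃ (vs : List G.V) (es : List G.E),
    vs.length = es.length + 1 ∧
    (∀ (i : ℕ) (e : G.E) (a b : G.V), es[i]? = some e → vs[i]? = some a →
      vs[i + 1]? = some b → G.ends e = s(a, b)) ∧
    vs.head? = vs.getLast? ∧ es.Nodup ∧ ∀ e : G.E, e ∈ es

/-- A cut-edge (bridge): its endpoints are disconnected after its removal. -/
def IsBridge (e : G.E) : Prop :=
  ∃ a b, G.ends e = s(a, b) ∧ ¬ G.ReachOn {e}ᶜ a b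

/-- 2-edge-connectivity: connected and without cut-edges. -/
def TwoEdgeConnected : Prop := G.Connected ∧ ∀ e, ¬ G.IsBridge e

/-- Reachability avoiding a vertex. -/
def ReachAvoid (v : G.V) (a b : G.V) : Prop :=
  Relation.ReflTransGen (fun x y => x ≠ v ∧ y ≠ v ∧ G.AdjOn Set.univ x y) a b

/-- A cut-vertex: two vertices in the same component get separated by its removal. -/
def IsCutVertex (v : G.V) : Prop :=
  ∃ a b, a ≠ v ∧ b ≠ v ∧ G.ReachOn Set.univ a b ∧ ¬ G.ReachAvoid v a b

/-- Biconnected: connected, at least two vertices, and without cut-vertices. -/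
def Biconnected : Prop :=
  G.Connected ∧ 2 ≤ Nat.card G.V ∧ ∀ v, ¬ G.IsCutVertex v

/-- The vertices covered by a set of edges. -/
def VertexSetOf (C : Set G.E) : Set G.V := {v | ∃ e ∈ C, v ∈ G.ends e}

/-- No two edge-disjoint cycles share more than two vertices. -/
def NoTwoCyclesShareThree : Prop :=
  ∀ C1 C2 : Set G.E, G.IsCycle C1 → G.IsCycle C2 → Disjoint C1 C2 →
    (G.VertexSetOf C1 ∩ G.VertexSetOf C2).ncard ≤ 2

/-- An Eulerian multiedge: two vertices joined by an even positive number of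
parallel edges. -/
def IsEulerianMultiedge : Prop :=
  Nat.card G.V = 2 ∧ 0 < Nat.card G.E ∧ Even (Nat.card G.E)

end MGraph

/-- Isomorphism of multigraphs. -/
structure MIso (G H : MGraph) where
  vEquiv : G.V ≃ H.V
  eEquiv : G.E ≃ H.E
  ends_eq : ∀ e, H.ends (eEquiv e) = (G.ends e).map vEquiv

namespace MGraph

/-- Vertex-identification: glue `u1 ∈ V(G1)` with `u2 ∈ V(G2)`. -/
noncomputable def vertexIdent (G1 G2 : MGraph) (u1 : G1.V) (u2 : G2.V) : MGraph where
  V := G1.V ⊕ {v : G2.V // v ≠ u2}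
  E := G1.E ⊕ G2.E
  finV := by have := G1.finV; have := G2.finV; infer_instance
  finE := by have := G1.finE; have := G2.finE; infer_instance
  ends := fun e =>
    match e with
    | Sum.inl e => (G1.ends e).map Sum.inl
    | Sum.inr e => (G2.ends e).map
        (fun v => if h : v = u2 then Sum.inl u1 else Sum.inr ⟨v, h⟩)
  noLoop := by
    rintro (e | e) h
    · exact G1.noLoop e ((Sym2.isDiag_map Sum.inl_injective).mp h)
    · refine G2.noLoop e ((Sym2.isDiag_map ?_).mp h)
      intro a b hab
      by_cases ha : a = u2 <;> by_cases hb : b = u2 <;>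
        simp [ha, hb] at hab ⊢ <;> simp_all

/-- Edge-identification: delete `e1` and `e2` (with endpoints `u1, v1` resp.
`u2, v2`) and add the new edges `u1u2` and `v1v2`. -/
def edgeIdent (G1 G2 : MGraph) (e1 : G1.E) (e2 : G2.E)
    (u1 v1 : G1.V) (u2 v2 : G2.V) : MGraph where
  V := G1.V ⊕ G2.V
  E := {e : G1.E // e ≠ e1} ⊕ {e : G2.E // e ≠ e2} ⊕ Bool
  finV := by have := G1.finV; have := G2.finV; infer_instance
  finE := by have := G1.finE; have := G2.finE; infer_instance
  ends := fun e =>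
    match e with
    | Sum.inl e => (G1.ends e.1).map Sum.inl
    | Sum.inr (Sum.inl e) => (G2.ends e.1).map Sum.inr
    | Sum.inr (Sum.inr true) => s(Sum.inl u1, Sum.inr u2)
    | Sum.inr (Sum.inr false) => s(Sum.inl v1, Sum.inr v2)
  noLoop := by
    rintro (e | e | b) h
    · exact G1.noLoop e.1 ((Sym2.isDiag_map Sum.inl_injective).mp h)
    · exact G2.noLoop e.1 ((Sym2.isDiag_map Sum.inr_injective).mp h)
    · cases b <;> simp [Sym2.mk_isDiag_iff] at h

/-- Vertex-edge-identification: identify `v1` with `v2`, delete `e1 = u1v1`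
and `e2 = u2v2`, and add a new edge `u1u2`. -/
noncomputable def vertexEdgeIdent (G1 G2 : MGraph) (e1 : G1.E) (e2 : G2.E)
    (u1 v1 : G1.V) (u2 v2 : G2.V) (h2 : G2.ends e2 = s(u2, v2)) : MGraph where
  V := G1.V ⊕ {w : G2.V // w ≠ v2}
  E := {e : G1.E // e ≠ e1} ⊕ {e : G2.E // e ≠ e2} ⊕ Unit
  finV := by have := G1.finV; have := G2.finV; infer_instance
  finE := by have := G1.finE; have := G2.finE; infer_instance
  ends := fun e =>
    match e with
    | Sum.inl e => (G1.ends e.1).map Sum.inl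
    | Sum.inr (Sum.inl e) => (G2.ends e.1).map
        (fun w => if h : w = v2 then Sum.inl v1 else Sum.inr ⟨w, h⟩)
    | Sum.inr (Sum.inr _) =>
        s(Sum.inl u1, Sum.inr ⟨u2, fun h =>
          G2.noLoop e2 (by rw [h2, h]; exact Sym2.mk_isDiag_iff.mpr rfl)⟩)
  noLoop := by
    rintro (e | e | u) h
    · exact G1.noLoop e.1 ((Sym2.isDiag_map Sum.inl_injective).mp h)
    · refine G2.noLoop e.1 ((Sym2.isDiag_map ?_).mp h)
      intro a b hab
      by_cases ha : a = v2 <;> by_cases hb : b = v2 <;>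
        simp [ha, hb] at hab ⊢ <;> simp_all
    · simp [Sym2.mk_isDiag_iff] at h

/-- Delete an edge from a multigraph. -/
def deleteEdge (G : MGraph) (e : G.E) : MGraph where
  V := G.V
  E := {f : G.E // f ≠ e}
  finV := G.finV
  finE := by have := G.finE; infer_instance
  ends := fun f => G.ends f.1
  noLoop := fun f => G.noLoop f.1

/-- `Sym2.pmap`-style map into a subtype. -/
noncomputable def sym2Pmap {α β : Type} {p : α → Prop} (f : ∀ a, p a → β)
    (s : Sym2 α) (h : ∀ a ∈ s, p a) : Sym2 β :=
  let z := Classical.choose (Quot.exists_rep s)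
  s(f z.1 (h z.1 (by
      have hz : Quot.mk _ z = s := Classical.choose_spec (Quot.exists_rep s)
      rw [← hz]; exact Sym2.mem_mk_left z.1 z.2)),
    f z.2 (h z.2 (by
      have hz : Quot.mk _ z = s := Classical.choose_spec (Quot.exists_rep s)
      rw [← hz]; exact Sym2.mem_mk_right z.1 z.2)))

/-- Delete a vertex (and all incident edges) from a multigraph. -/
noncomputable def deleteVertex (G : MGraph) (v : G.V) : MGraph where
  V := {w : G.V // w ≠ v}
  E := {e : G.E // v ∉ G.ends e}
  finV := by have := G.finV; infer_instance
  finE := by have := G.finE; infer_instance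
  ends := fun e => sym2Pmap (fun a ha => (⟨a, ha⟩ : {w : G.V // w ≠ v}))
    (G.ends e.1) (fun a ha hav => e.2 (hav ▸ ha))
  noLoop := by
    rintro ⟨e, he⟩ h
    apply G.noLoop e
    unfold sym2Pmap at h
    have hz : Quot.mk _ (Classical.choose (Quot.exists_rep (G.ends e))) = G.ends e :=
      Classical.choose_spec (Quot.exists_rep (G.ends e))
    rw [Sym2.mk_isDiag_iff] at h
    have : (Classical.choose (Quot.exists_rep (G.ends e))).1 =
        (Classical.choose (Quot.exists_rep (G.ends e))).2 := congrArg Subtype.val h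
    rw [← hz]
    have h' := Sym2.mk_isDiag_iff.mpr this
    exact h'

end MGraph

/-- A tree decomposition of a multigraph: a tree of bags covering all vertices
and edges such that the bags containing a given vertex form a subtree. -/
structure TreeDecomp (G : MGraph) where
  ι : Type
  t : SimpleGraph ι
  isTree : t.IsTree
  bag : ι → Set G.V
  covers_vertex : ∀ v : G.V, ∃ i, v ∈ bag i
  covers_edge : ∀ e : G.E, ∃ i, ∀ v ∈ G.ends e, v ∈ bag i
  bags_connected : ∀ v : G.V, (SimpleGraph.induce {i | v ∈ bag i} t).Connected

namespace MGraph

/-- The graph has treewidth at most `k`. -/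
def twLE (G : MGraph) (k : ℕ) : Prop :=
  ∃ T : TreeDecomp G, ∀ i, (T.bag i).ncard ≤ k + 1

/-- Treewidth of a multigraph. -/
noncomputable def treewidth (G : MGraph) : ℕ := sInf {k | G.twLE k}

/-- The closed necklace on `n ≥ 2` vertices: a cycle of length `n` with all
of its edges doubled. -/
def necklace (n : ℕ) (hn : 2 ≤ n) : MGraph where
  V := ZMod n
  E := ZMod n × Bool
  finV := by have : NeZero n := ⟨by omega⟩; infer_instance
  finE := by have : NeZero n := ⟨by omega⟩; infer_instance
  ends := fun e => s(e.1, e.1 + 1)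
  noLoop := by
    have : Fact (1 < n) := ⟨hn⟩
    intro e h
    rw [Sym2.mk_isDiag_iff] at h
    exact one_ne_zero (left_eq_add.mp h)

end MGraph


/-!
The glued vertex `u` separates the edges of `G1` from those of `G2`. For a cycle `C` of the glued
graph, every vertex other than `u` has even degree in the `G1`-part of `C`, hence so does `u`
(handshake lemma); as `u` has degree at most 2 in `C`, one side contributes no edge at `u`, and
connectedness of `C` then confines `C` to one side. So the cycle decompositions of the glued graph
are exactly the unions of one of `G1` and one of `G2`, their sizes form the sumset of the two size
sets, and infimum and supremum are additive on sumsets of nonempty bounded sets of naturals. An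
Euler tour makes both size sets nonempty.
-/

attribute [instance] MGraph.finV MGraph.finE

open scoped Pointwise

namespace MGraph

variable {G : MGraph}

theorem exists_mem_ends (e : G.E) : ∃ a, a ∈ G.ends e :=
  Sym2.inductionOn (G.ends e) fun a _ => ⟨a, Sym2.mem_mk_left _ _⟩

theorem degOn_eq_zero_iff {C : Set G.E} {v : G.V} :
    G.degOn C v = 0 ↔ ∀ e ∈ C, v ∉ G.ends e := by
  rw [degOn, Set.ncard_eq_zero]
  simp [Set.eq_empty_iff_forall_notMem]

theorem degOn_inter_add_degOn_diff (C P : Set G.E) (v : G.V) :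
    G.degOn (C ∩ P) v + G.degOn (C \ P) v = G.degOn C v := by
  unfold degOn
  rw [← Set.ncard_inter_add_ncard_sdiff_eq_ncard {e | e ∈ C ∧ v ∈ G.ends e} P]
  congr 2 <;> ext e <;> simp only [Set.mem_inter_iff, Set.mem_sdiff, Set.mem_ofPred_eq] <;> tauto

theorem sum_degOn [Fintype G.V] (C : Set G.E) : ∑ v, G.degOn C v = 2 * C.ncard := by
  have := Fintype.ofFinite G.E
  calc ∑ v, G.degOn C v = ∑ v, ∑ e ∈ C.toFinset, if v ∈ G.ends e then 1 else 0 := by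
        refine Finset.sum_congr rfl fun v _ => ?_
        rw [degOn, Set.ncard_eq_toFinset_card', ← Finset.card_filter]
        congr 1; ext e; simp
    _ = ∑ e ∈ C.toFinset, ∑ v, if v ∈ G.ends e then 1 else 0 := Finset.sum_comm
    _ = ∑ e ∈ C.toFinset, 2 := by
        refine Finset.sum_congr rfl fun e _ => ?_
        rw [← Finset.card_filter, ← Sym2.card_toFinset_of_not_isDiag _ (G.noLoop e)]
        congr 1; ext v; simp
    _ = 2 * C.ncard := by rw [Finset.sum_const, smul_eq_mul, Set.ncard_eq_toFinset_card', mul_comm]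

theorem even_degOn_of_forall_ne {C : Set G.E} {u : G.V}
    (h : ∀ v ≠ u, Even (G.degOn C v)) : Even (G.degOn C u) := by
  have := Fintype.ofFinite G.V
  have hsum : Even (∑ v, G.degOn C v) := sum_degOn C ▸ even_two_mul _
  rw [← Finset.add_sum_erase _ _ (Finset.mem_univ u)] at hsum
  exact (Nat.even_add.1 hsum).2
    (Finset.even_sum _ fun v hv => h v (Finset.ne_of_mem_erase hv))

theorem IsCycle.subset_or_subset_compl_of_separated {C P : Set G.E} (hC : G.IsCycle C)
    (hsep : ∀ v, ∀ x ∈ C ∩ P, ∀ y ∈ C \ P, v ∈ G.ends x → v ∉ G.ends y) :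
    C ⊆ P ∨ C ⊆ Pᶜ := by
  by_contra! h
  obtain ⟨f, hfC, hfP⟩ := Set.not_subset.1 h.1
  obtain ⟨e, heC, heP⟩ := Set.not_subset.1 h.2
  rw [Set.notMem_compl_iff] at heP
  obtain ⟨a, ha⟩ := exists_mem_ends e
  obtain ⟨b, hb⟩ := exists_mem_ends f
  have htouch : ∀ q, G.ReachOn C a q → ∃ x ∈ C ∩ P, q ∈ G.ends x := by
    intro q hq
    induction hq with
    | refl => exact ⟨e, ⟨heC, heP⟩, ha⟩
    | @tail m q _ hadj ih =>
      obtain ⟨x, hx, hmx⟩ := ih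
      obtain ⟨y, hyC, hy⟩ := hadj
      by_cases hyP : y ∈ P
      · exact ⟨y, ⟨hyC, hyP⟩, hy ▸ Sym2.mem_mk_right _ _⟩
      · exact absurd (hy ▸ Sym2.mem_mk_left _ _) (hsep m x hx y ⟨hyC, hyP⟩ hmx)
  obtain ⟨x, hx, hbx⟩ := htouch b (hC.2.2 e heC f hfC a b ha hb)
  exact hsep b x hx f ⟨hfC, hfP⟩ hbx hb

/-- By parity, the cycle has an even number of edges of each class at `u`, so at `u` it meets at
most one class. -/
theorem IsCycle.subset_or_subset_compl {C P : Set G.E} {u : G.V} (hC : G.IsCycle C)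
    (hu : ∀ v ≠ u, ∀ x ∈ P, ∀ y ∉ P, v ∈ G.ends x → v ∉ G.ends y) : C ⊆ P ∨ C ⊆ Pᶜ := by
  have hsplit : ∀ v ≠ u, G.degOn (C ∩ P) v = 0 ∨ G.degOn (C \ P) v = 0 := by
    intro v hv
    simp only [degOn_eq_zero_iff]
    by_contra! ⟨⟨x, hx, hvx⟩, ⟨y, hy, hvy⟩⟩
    exact hu v hv x hx.2 y hy.2 hvx hvy
  have heven : ∀ v ≠ u, Even (G.degOn (C ∩ P) v) ∧ Even (G.degOn (C \ P) v) := by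
    intro v hv
    have hsum := degOn_inter_add_degOn_diff C P v
    simp only [Nat.even_iff]
    rcases hsplit v hv with h | h <;> rcases hC.2.1 v with h' | h' <;> omega
  have hu0 : G.degOn (C ∩ P) u = 0 ∨ G.degOn (C \ P) u = 0 := by
    have h1 := Nat.even_iff.1 (even_degOn_of_forall_ne fun v hv => (heven v hv).1)
    have h2 := Nat.even_iff.1 (even_degOn_of_forall_ne fun v hv => (heven v hv).2)
    have hsum := degOn_inter_add_degOn_diff C P u
    rcases hC.2.1 u with h' | h' <;> omega
  refine hC.subset_or_subset_compl_of_separated fun v x hx y hy hvx hvy => ?_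
  by_cases hv : v = u
  · subst hv
    rcases hu0 with h | h
    · exact degOn_eq_zero_iff.1 h x hx hvx
    · exact degOn_eq_zero_iff.1 h y hy hvy
  · exact hu v hv x hx.2 y hy.2 hvx hvy

theorem isCycleDecompOn_empty : G.IsCycleDecompOn ∅ ∅ :=
  ⟨fun _ h => h.elim, fun _ h => h.elim⟩

theorem IsCycle.isCycleDecompOn_singleton {C : Set G.E} (hC : G.IsCycle C) :
    G.IsCycleDecompOn C {C} :=
  ⟨fun _ h => (Set.mem_singleton_iff.1 h).symm ▸ ⟨hC, subset_rfl⟩,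
    fun _ he => ⟨C, ⟨rfl, he⟩, fun _ h => h.1⟩⟩

section IsCycleDecompOn

variable {F₁ F₂ : Set G.E} {D₁ D₂ : Set (Set G.E)}

theorem IsCycleDecompOn.disjoint (h₁ : G.IsCycleDecompOn F₁ D₁) (h₂ : G.IsCycleDecompOn F₂ D₂)
    (hF : Disjoint F₁ F₂) : Disjoint D₁ D₂ := by
  refine Set.disjoint_left.2 fun C hC₁ hC₂ => ?_
  obtain ⟨e, he⟩ := (h₁.1 C hC₁).1.1
  exact Set.disjoint_left.1 hF ((h₁.1 C hC₁).2 he) ((h₂.1 C hC₂).2 he)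

theorem IsCycleDecompOn.union (h₁ : G.IsCycleDecompOn F₁ D₁) (h₂ : G.IsCycleDecompOn F₂ D₂)
    (hF : Disjoint F₁ F₂) : G.IsCycleDecompOn (F₁ ∪ F₂) (D₁ ∪ D₂) := by
  refine ⟨?_, ?_⟩
  · rintro C (hC | hC)
    · exact ⟨(h₁.1 C hC).1, (h₁.1 C hC).2.trans Set.subset_union_left⟩
    · exact ⟨(h₂.1 C hC).1, (h₂.1 C hC).2.trans Set.subset_union_right⟩
  · rintro e (he | he)
    · obtain ⟨C, ⟨hCD, heC⟩, huniq⟩ := h₁.2 e he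
      refine ⟨C, ⟨Or.inl hCD, heC⟩, ?_⟩
      rintro C' ⟨hC' | hC', heC'⟩
      · exact huniq C' ⟨hC', heC'⟩
      · exact absurd ((h₂.1 C' hC').2 heC') (Set.disjoint_left.1 hF he)
    · obtain ⟨C, ⟨hCD, heC⟩, huniq⟩ := h₂.2 e he
      refine ⟨C, ⟨Or.inr hCD, heC⟩, ?_⟩
      rintro C' ⟨hC' | hC', heC'⟩
      · exact absurd ((h₁.1 C' hC').2 heC') (Set.disjoint_right.1 hF he)
      · exact huniq C' ⟨hC', heC'⟩

theorem IsCycleDecompOn.inter {F P : Set G.E} {D : Set (Set G.E)} (hD : G.IsCycleDecompOn F D)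
    (hP : ∀ C ∈ D, C ⊆ P ∨ C ⊆ Pᶜ) : G.IsCycleDecompOn (F ∩ P) {C ∈ D | C ⊆ P} := by
  refine ⟨fun C hC => ⟨(hD.1 C hC.1).1, Set.subset_inter (hD.1 C hC.1).2 hC.2⟩, fun e he => ?_⟩
  obtain ⟨C, ⟨hCD, heC⟩, huniq⟩ := hD.2 e he.1
  have hCP : C ⊆ P := (hP C hCD).resolve_right fun h => h heC he.2
  exact ⟨C, ⟨⟨hCD, hCP⟩, heC⟩, fun C' hC' => huniq C' ⟨hC'.1.1, hC'.2⟩⟩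

end IsCycleDecompOn

theorem ReachOn.symm {F : Set G.E} {a b : G.V} (h : G.ReachOn F a b) : G.ReachOn F b a := by
  induction h with
  | refl => exact .refl
  | tail _ hadj ih =>
    obtain ⟨x, hx, hends⟩ := hadj
    exact .head ⟨x, hx, hends.trans Sym2.eq_swap⟩ ih

/-- A closed walk `v 0, e 0, v 1, …, e (n-1), v n = v 0` using no edge twice. -/
def IsClosedTrail (G : MGraph) (n : ℕ) (v : ℕ → G.V) (e : ℕ → G.E) : Prop :=
  (∀ i < n, G.ends (e i) = s(v i, v (i + 1))) ∧ v n = v 0 ∧ Set.InjOn e (Set.Iio n)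

namespace IsClosedTrail

variable {n : ℕ} {v : ℕ → G.V} {e : ℕ → G.E}

theorem degOn_eq (h : G.IsClosedTrail n v e) (w : G.V) :
    G.degOn (e '' Set.Iio n) w = 2 * ((Finset.range n).filter (v · = w)).card := by
  have hvisit : ∀ i < n, (if w ∈ G.ends (e i) then 1 else 0) =
      (if v i = w then 1 else 0) + (if v (i + 1) = w then 1 else 0) := by
    intro i hi
    have hne : v i ≠ v (i + 1) := fun hv =>
      G.noLoop (e i) (by rw [h.1 i hi, hv]; exact Sym2.mk_isDiag_iff.2 rfl)
    rw [h.1 i hi]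
    by_cases h1 : v i = w <;> by_cases h2 : v (i + 1) = w <;> simp_all [eq_comm]
  have hshift : ∑ i ∈ Finset.range n, (if v (i + 1) = w then 1 else 0) =
      ∑ i ∈ Finset.range n, (if v i = w then 1 else 0) := by
    have h1 := Finset.sum_range_succ (fun i => if v i = w then 1 else 0) n
    have h2 := Finset.sum_range_succ' (fun i => if v i = w then 1 else 0) n
    simp only [h.2.1] at h1
    omega
  have hset : {x | x ∈ e '' Set.Iio n ∧ w ∈ G.ends x} =
      e '' ↑((Finset.range n).filter fun i => w ∈ G.ends (e i)) := by
    ext x; aesop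
  calc G.degOn (e '' Set.Iio n) w
      = ((Finset.range n).filter fun i => w ∈ G.ends (e i)).card := by
        rw [degOn, hset, (h.2.2.mono fun i hi => by simp_all).ncard_image, Set.ncard_coe_finset]
    _ = ∑ i ∈ Finset.range n, if w ∈ G.ends (e i) then 1 else 0 := Finset.card_filter _ _
    _ = ∑ i ∈ Finset.range n,
          ((if v i = w then 1 else 0) + (if v (i + 1) = w then 1 else 0)) :=
        Finset.sum_congr rfl fun i hi => hvisit i (Finset.mem_range.1 hi)
    _ = 2 * ((Finset.range n).filter (v · = w)).card := by
        rw [Finset.sum_add_distrib, hshift, Finset.card_filter]; ring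

theorem reachOn (h : G.IsClosedTrail n v e) : ∀ k ≤ n, G.ReachOn (e '' Set.Iio n) (v 0) (v k)
  | 0, _ => .refl
  | k + 1, hk => (h.reachOn k (by omega)).tail ⟨e k, ⟨k, (by omega : k < n), rfl⟩, h.1 k (by omega)⟩

theorem isCycle (h : G.IsClosedTrail n v e) (hn : 0 < n) (hv : Set.InjOn v (Set.Iio n)) :
    G.IsCycle (e '' Set.Iio n) := by
  refine ⟨⟨e 0, 0, hn, rfl⟩, fun w => ?_, ?_⟩
  · have hvisits : ((Finset.range n).filter (v · = w)).card ≤ 1 :=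
      Finset.card_le_one.2 fun i hi j hj => by
        simp only [Finset.mem_filter, Finset.mem_range] at hi hj
        exact hv hi.1 hj.1 (hi.2.trans hj.2.symm)
    rw [h.degOn_eq]
    omega
  · have hreach : ∀ k < n, ∀ c ∈ G.ends (e k), G.ReachOn (e '' Set.Iio n) (v 0) c := by
      intro k hk c hc
      rw [h.1 k hk, Sym2.mem_iff] at hc
      rcases hc with rfl | rfl
      exacts [h.reachOn k hk.le, h.reachOn (k + 1) hk]
    rintro _ ⟨i, hi, rfl⟩ _ ⟨j, hj, rfl⟩ a b ha hb
    exact (hreach i hi a ha).symm.trans (hreach j hj b hb)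

theorem isCycle_segment (h : G.IsClosedTrail n v e) {i d : ℕ} (hid : i + d ≤ n) (hd : 0 < d)
    (hvd : v (i + d) = v i) (hv : Set.InjOn v (Set.Ico i (i + d))) :
    G.IsCycle (e '' Set.Ico i (i + d)) := by
  have hshift : G.IsClosedTrail d (fun k => v (i + k)) (fun k => e (i + k)) :=
    ⟨fun k hk => h.1 (i + k) (by omega), hvd, fun a ha b hb hab => by
      rw [Set.mem_Iio] at ha hb
      have := h.2.2 (by omega : i + a < n) (by omega : i + b < n) hab
      omega⟩
  have himage : (fun k => e (i + k)) '' Set.Iio d = e '' Set.Ico i (i + d) := by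
    ext x
    simp only [Set.mem_image, Set.mem_Iio, Set.mem_Ico]
    constructor
    · rintro ⟨k, hk, rfl⟩
      exact ⟨i + k, ⟨by omega, by omega⟩, rfl⟩
    · rintro ⟨k, ⟨hk₁, hk₂⟩, rfl⟩
      exact ⟨k - i, by omega, by rw [Nat.add_sub_cancel' hk₁]⟩
  refine himage ▸ hshift.isCycle hd fun a ha b hb hab => ?_
  simp only [Set.mem_Iio] at ha hb
  have := hv (⟨by omega, by omega⟩ : i + a ∈ Set.Ico i (i + d))
    (⟨by omega, by omega⟩ : i + b ∈ Set.Ico i (i + d)) hab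
  omega

theorem excise (h : G.IsClosedTrail n v e) {i d : ℕ} (hid : i + d ≤ n)
    (hvd : v (i + d) = v i) :
    G.IsClosedTrail (n - d) (v ∘ fun k => if k < i then k else k + d)
      (e ∘ fun k => if k < i then k else k + d) := by
  refine ⟨fun k hk => ?_, ?_, fun a ha b hb hab => ?_⟩
  · simp only [Function.comp_apply]
    by_cases hki : k < i
    · rw [if_pos hki, h.1 k (by omega)]
      by_cases hk : k + 1 < i
      · rw [if_pos hk]
      · rw [if_neg hk, show k + 1 = i by omega, hvd]
    · rw [if_neg hki, if_neg (by omega), h.1 (k + d) (by omega), Nat.add_right_comm]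
  · simp only [Function.comp_apply, if_neg (show ¬ n - d < i by omega),
      Nat.sub_add_cancel (by omega : d ≤ n), h.2.1]
    split_ifs with hi
    · rfl
    · rw [show i = 0 by omega] at hvd
      simpa using hvd.symm
  · simp only [Set.mem_Iio] at ha hb
    simp only [Function.comp_apply] at hab
    split_ifs at hab <;>
      have := h.2.2 (Set.mem_Iio.2 (by omega)) (Set.mem_Iio.2 (by omega)) hab <;> omega

theorem image_excise (h : G.IsClosedTrail n v e) {i d : ℕ} (hid : i + d ≤ n) :
    (e ∘ fun k => if k < i then k else k + d) '' Set.Iio (n - d) =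
      e '' Set.Iio n \ e '' Set.Ico i (i + d) := by
  rw [Set.image_comp,
    ← h.2.2.image_sdiff_subset (Set.Ico_subset_Iio_self.trans (Set.Iio_subset_Iio hid))]
  congr 1
  ext k
  simp only [Set.mem_image, Set.mem_Iio, Set.mem_sdiff, Set.mem_Ico]
  constructor
  · rintro ⟨j, hj, rfl⟩
    split_ifs <;> omega
  · rintro ⟨hk, hki⟩
    by_cases hk' : k < i
    · exact ⟨k, by omega, if_pos hk'⟩
    · exact ⟨k - d, by omega, by rw [if_neg (by omega), Nat.sub_add_cancel (by omega)]⟩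

/-- A closed trail decomposes into cycles: the shortest closed subtrail is a cycle, and cutting
it out leaves a shorter closed trail. -/
theorem exists_isCycleDecompOn (h : G.IsClosedTrail n v e) :
    ∃ D, G.IsCycleDecompOn (e '' Set.Iio n) D := by
  induction n using Nat.strong_induction_on generalizing v e with
  | _ n ih =>
  rcases Nat.eq_zero_or_pos n with rfl | hn
  · exact ⟨∅, by simpa using isCycleDecompOn_empty⟩
  have hgap : ∃ d, 0 < d ∧ ∃ i, i + d ≤ n ∧ v (i + d) = v i :=
    ⟨n, hn, 0, by omega, by simpa using h.2.1⟩
  obtain ⟨hd, i, hid, hvd⟩ := Nat.find_spec hgap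
  have hne : ∀ a b, i ≤ a → a < b → b < i + Nat.find hgap → v b ≠ v a :=
    fun a b ha hab hb hv => Nat.find_min hgap (by omega : b - a < Nat.find hgap)
      ⟨by omega, a, by omega, by rwa [Nat.add_sub_cancel' hab.le]⟩
  have hinj : Set.InjOn v (Set.Ico i (i + Nat.find hgap)) := by
    intro a ha b hb hab
    simp only [Set.mem_Ico] at ha hb
    rcases lt_trichotomy a b with hlt | rfl | hgt
    · exact absurd hab.symm (hne a b ha.1 hlt hb.2)
    · rfl
    · exact absurd hab (hne b a hb.1 hgt ha.2)
  obtain ⟨D, hD⟩ := ih _ (by omega) (h.excise hid hvd)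
  rw [h.image_excise hid] at hD
  have hsub : e '' Set.Ico i (i + Nat.find hgap) ⊆ e '' Set.Iio n :=
    Set.image_mono (Set.Ico_subset_Iio_self.trans (Set.Iio_subset_Iio hid))
  refine ⟨{e '' Set.Ico i (i + Nat.find hgap)} ∪ D, ?_⟩
  have hdecomp := (h.isCycle_segment hid hd hvd hinj).isCycleDecompOn_singleton.union hD
    Set.disjoint_sdiff_right
  rwa [Set.union_sdiff_cancel hsub] at hdecomp

end IsClosedTrail

theorem IsEulerian.exists_isCycleDecomp (h : G.IsEulerian) : ∃ D, G.IsCycleDecomp D := by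
  obtain ⟨vs, es, hlen, hends, hclosed, hnodup, hall⟩ := h
  rcases isEmpty_or_nonempty G.E with hE | ⟨⟨e₀⟩⟩
  · exact ⟨∅, by simpa [IsCycleDecomp, Set.univ_eq_empty_iff.2 hE] using isCycleDecompOn_empty⟩
  have hvs : 0 < vs.length := by omega
  set v : ℕ → G.V := fun i => vs.getD i vs[0]
  set e : ℕ → G.E := fun i => es.getD i e₀
  have hv : ∀ i (hi : i < vs.length), vs[i]? = some (v i) := fun i hi => by
    simp [v, List.getElem?_eq_getElem hi]
  have he : ∀ i (hi : i < es.length), e i = es[i] := fun i hi => by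
    simp [e, List.getElem?_eq_getElem hi]
  have htrail : G.IsClosedTrail es.length v e := by
    refine ⟨fun i hi => hends i _ _ _ (by rw [he i hi, List.getElem?_eq_getElem hi])
      (hv i (by omega)) (hv (i + 1) (by omega)), ?_, fun a ha b hb hab => ?_⟩
    · rw [List.head?_eq_getElem?, List.getLast?_eq_getElem?,
        show vs.length - 1 = es.length by omega, hv 0 hvs, hv _ (by omega)] at hclosed
      exact (Option.some_injective _ hclosed).symm
    · rw [Set.mem_Iio] at ha hb
      rw [he a ha, he b hb] at hab
      exact hnodup.getElem_inj_iff.1 hab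
  have huniv : e '' Set.Iio es.length = Set.univ := Set.eq_univ_of_forall fun x => by
    obtain ⟨i, hi, rfl⟩ := List.mem_iff_getElem.1 (hall x)
    exact ⟨i, hi, he i hi⟩
  obtain ⟨D, hD⟩ := htrail.exists_isCycleDecompOn
  exact ⟨D, by rwa [huniv] at hD⟩

/-- `cOn F` and `nuOn F` are the infimum and supremum of this set. -/
def decompSizes (G : MGraph) (F : Set G.E) : Set ℕ :=
  {n | ∃ D, G.IsCycleDecompOn F D ∧ D.ncard = n}

theorem bddAbove_decompSizes (F : Set G.E) : BddAbove (G.decompSizes F) :=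
  ⟨Nat.card (Set G.E), by rintro _ ⟨D, -, rfl⟩; exact Set.ncard_le_card D⟩

theorem decompSizes_eq_add (F P : Set G.E) (hP : ∀ C, G.IsCycle C → C ⊆ P ∨ C ⊆ Pᶜ) :
    G.decompSizes F = G.decompSizes (F ∩ P) + G.decompSizes (F \ P) := by
  have hF : Disjoint (F ∩ P) (F \ P) := Set.disjoint_left.2 fun _ he he' => he'.2 he.2
  ext n
  constructor
  · rintro ⟨D, hD, rfl⟩
    have hP' : ∀ C ∈ D, C ⊆ P ∨ C ⊆ Pᶜ := fun C hC => hP C (hD.1 C hC).1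
    have h₁ := hD.inter hP'
    have h₂ : G.IsCycleDecompOn (F \ P) {C ∈ D | C ⊆ Pᶜ} :=
      Set.sdiff_eq F P ▸ hD.inter fun C hC => by rw [compl_compl]; exact (hP' C hC).symm
    have hsplit : D = {C ∈ D | C ⊆ P} ∪ {C ∈ D | C ⊆ Pᶜ} := by
      ext C
      constructor
      · exact fun hC => (hP' C hC).imp (⟨hC, ·⟩) (⟨hC, ·⟩)
      · rintro (hC | hC) <;> exact hC.1
    refine ⟨_, ⟨_, h₁, rfl⟩, _, ⟨_, h₂, rfl⟩, ?_⟩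
    conv_rhs => rw [hsplit]
    exact (Set.ncard_union_eq (h₁.disjoint h₂ hF)).symm
  · intro hn
    obtain ⟨_, ⟨D₁, h₁, rfl⟩, _, ⟨D₂, h₂, rfl⟩, rfl⟩ := Set.mem_add.1 hn
    exact ⟨D₁ ∪ D₂, Set.inter_union_sdiff F P ▸ h₁.union h₂ hF,
      Set.ncard_union_eq (h₁.disjoint h₂ hF)⟩

end MGraph

theorem Nat.csInf_add {s t : Set ℕ} (hs : s.Nonempty) (ht : t.Nonempty) :
    sInf (s + t) = sInf s + sInf t :=
  le_antisymm (Nat.sInf_le (Set.add_mem_add (Nat.sInf_mem hs) (Nat.sInf_mem ht)))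
    (le_csInf (hs.add ht) fun _ ⟨_, ha, _, hb, hab⟩ =>
      hab ▸ add_le_add (Nat.sInf_le ha) (Nat.sInf_le hb))

theorem Nat.csSup_add {s t : Set ℕ} (hs : s.Nonempty) (hs' : BddAbove s) (ht : t.Nonempty)
    (ht' : BddAbove t) : sSup (s + t) = sSup s + sSup t :=
  le_antisymm
    (csSup_le (hs.add ht) fun _ ⟨_, ha, _, hb, hab⟩ =>
      hab ▸ add_le_add (le_csSup hs' ha) (le_csSup ht' hb))
    (le_csSup (hs'.add ht') (Set.add_mem_add (Nat.sSup_mem hs hs') (Nat.sSup_mem ht ht')))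

structure MEmb (H G : MGraph) where
  vEmb : H.V ↪ G.V
  eEmb : H.E ↪ G.E
  ends_eq : ∀ e, G.ends (eEmb e) = (H.ends e).map vEmb

namespace MEmb

open MGraph

variable {H G : MGraph} (f : MEmb H G)

theorem exists_eq_of_mem_ends {e : H.E} {w : G.V} (hw : w ∈ G.ends (f.eEmb e)) :
    ∃ a ∈ H.ends e, f.vEmb a = w := by
  rw [f.ends_eq] at hw
  exact Sym2.mem_map.1 hw

theorem mem_ends_iff {e : H.E} {a : H.V} : f.vEmb a ∈ G.ends (f.eEmb e) ↔ a ∈ H.ends e :=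
  ⟨fun h => let ⟨_, hb, hab⟩ := f.exists_eq_of_mem_ends h; f.vEmb.injective hab ▸ hb,
    fun h => f.ends_eq e ▸ Sym2.mem_map.2 ⟨a, h, rfl⟩⟩

theorem degOn_image (C : Set H.E) (a : H.V) :
    G.degOn (f.eEmb '' C) (f.vEmb a) = H.degOn C a := by
  have hset : {x | x ∈ f.eEmb '' C ∧ f.vEmb a ∈ G.ends x} =
      f.eEmb '' {e | e ∈ C ∧ a ∈ H.ends e} := by
    ext x
    constructor
    · rintro ⟨⟨e, he, rfl⟩, ha⟩
      exact ⟨e, ⟨he, f.mem_ends_iff.1 ha⟩, rfl⟩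
    · rintro ⟨e, ⟨he, ha⟩, rfl⟩
      exact ⟨⟨e, he, rfl⟩, f.mem_ends_iff.2 ha⟩
  rw [degOn, degOn, hset, Set.ncard_image_of_injective _ f.eEmb.injective]

theorem degOn_image_of_notMem_range (C : Set H.E) {w : G.V} (hw : w ∉ Set.range f.vEmb) :
    G.degOn (f.eEmb '' C) w = 0 := by
  refine degOn_eq_zero_iff.2 ?_
  rintro _ ⟨e, -, rfl⟩ hwe
  obtain ⟨a, -, ha⟩ := f.exists_eq_of_mem_ends hwe
  exact hw ⟨a, ha⟩

theorem reachOn_image_iff {C : Set H.E} {a b : H.V} :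
    G.ReachOn (f.eEmb '' C) (f.vEmb a) (f.vEmb b) ↔ H.ReachOn C a b := by
  refine ⟨fun h => ?_, fun h => Relation.ReflTransGen.lift f.vEmb (fun x y ⟨e, he, hends⟩ =>
    ⟨f.eEmb e, ⟨e, he, rfl⟩, by rw [f.ends_eq, hends, Sym2.map_mk]⟩) _ _ h⟩
  suffices ∀ w, G.ReachOn (f.eEmb '' C) (f.vEmb a) w → ∃ c, f.vEmb c = w ∧ H.ReachOn C a c by
    obtain ⟨c, hc, hac⟩ := this _ h
    exact f.vEmb.injective hc ▸ hac
  intro w hw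
  induction hw with
  | refl => exact ⟨a, rfl, .refl⟩
  | tail _ hadj ih =>
    obtain ⟨c, rfl, hc⟩ := ih
    obtain ⟨_, ⟨e, he, rfl⟩, hends⟩ := hadj
    obtain ⟨d, -, rfl⟩ := f.exists_eq_of_mem_ends (hends ▸ Sym2.mem_mk_right _ _)
    refine ⟨d, rfl, hc.tail ⟨e, he, Sym2.map.injective f.vEmb.injective ?_⟩⟩
    rw [← f.ends_eq, hends, Sym2.map_mk]

theorem isCycle_image_iff {C : Set H.E} : G.IsCycle (f.eEmb '' C) ↔ H.IsCycle C := by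
  constructor
  · rintro ⟨hne, hdeg, hconn⟩
    refine ⟨Set.image_nonempty.1 hne, fun a => f.degOn_image C a ▸ hdeg (f.vEmb a),
      fun e he e' he' a b ha hb => f.reachOn_image_iff.1 ?_⟩
    exact hconn _ ⟨e, he, rfl⟩ _ ⟨e', he', rfl⟩ _ _ (f.mem_ends_iff.2 ha) (f.mem_ends_iff.2 hb)
  · rintro ⟨hne, hdeg, hconn⟩
    refine ⟨hne.image _, fun w => ?_, ?_⟩
    · by_cases hw : w ∈ Set.range f.vEmb
      · obtain ⟨a, rfl⟩ := hw
        rw [f.degOn_image]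
        exact hdeg a
      · exact Or.inl (f.degOn_image_of_notMem_range C hw)
    · rintro _ ⟨e, he, rfl⟩ _ ⟨e', he', rfl⟩ w w' hw hw'
      obtain ⟨a, ha, rfl⟩ := f.exists_eq_of_mem_ends hw
      obtain ⟨b, hb, rfl⟩ := f.exists_eq_of_mem_ends hw'
      exact f.reachOn_image_iff.2 (hconn e he e' he' a b ha hb)

theorem isCycleDecompOn_image_iff {F : Set H.E} {D : Set (Set H.E)} :
    G.IsCycleDecompOn (f.eEmb '' F) ((f.eEmb '' ·) '' D) ↔ H.IsCycleDecompOn F D := by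
  have himg : Function.Injective (f.eEmb '' · : Set H.E → Set G.E) :=
    Set.image_injective.2 f.eEmb.injective
  simp only [IsCycleDecompOn, Set.forall_mem_image, f.isCycle_image_iff,
    Set.image_subset_image_iff f.eEmb.injective]
  refine and_congr_right fun _ => ⟨fun h e he => ?_, fun h e he => ?_⟩
  · obtain ⟨_, ⟨⟨C, hC, rfl⟩, heC⟩, huniq⟩ := h he
    exact ⟨C, ⟨hC, f.eEmb.injective.mem_set_image.1 heC⟩, fun C' hC' =>
      himg (huniq _ ⟨⟨C', hC'.1, rfl⟩, Set.mem_image_of_mem _ hC'.2⟩)⟩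
  · obtain ⟨C, ⟨hC, heC⟩, huniq⟩ := h e he
    refine ⟨_, ⟨⟨C, hC, rfl⟩, Set.mem_image_of_mem _ heC⟩, ?_⟩
    rintro _ ⟨⟨C', hC', rfl⟩, heC'⟩
    rw [huniq C' ⟨hC', f.eEmb.injective.mem_set_image.1 heC'⟩]

theorem decompSizes_image (F : Set H.E) : G.decompSizes (f.eEmb '' F) = H.decompSizes F := by
  have himg : Function.Injective (f.eEmb '' · : Set H.E → Set G.E) :=
    Set.image_injective.2 f.eEmb.injective
  ext n
  constructor
  · rintro ⟨D', hD', rfl⟩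
    have hD'eq : (f.eEmb '' ·) '' ((f.eEmb ⁻¹' ·) '' D') = D' := by
      rw [Set.image_image]
      conv_rhs => rw [← Set.image_id D']
      exact Set.image_congr fun C hC => Set.image_preimage_eq_of_subset
        ((hD'.1 C hC).2.trans (Set.image_subset_range _ _))
    refine ⟨_, f.isCycleDecompOn_image_iff.1 (hD'eq ▸ hD'), ?_⟩
    rw [← Set.ncard_image_of_injective _ himg, hD'eq]
  · rintro ⟨D, hD, rfl⟩
    exact ⟨_, f.isCycleDecompOn_image_iff.2 hD, Set.ncard_image_of_injective _ himg⟩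

end MEmb

namespace MGraph

variable {G1 G2 : MGraph} {u1 : G1.V} {u2 : G2.V}

noncomputable def vertexIdentInr (u1 : G1.V) (u2 : G2.V) (v : G2.V) :
    G1.V ⊕ {v : G2.V // v ≠ u2} :=
  if h : v = u2 then Sum.inl u1 else Sum.inr ⟨v, h⟩

theorem vertexIdentInr_injective : Function.Injective (vertexIdentInr (G2 := G2) u1 u2) := by
  intro a b hab
  by_cases ha : a = u2 <;> by_cases hb : b = u2 <;> simp_all [vertexIdentInr]

theorem inl_eq_vertexIdentInr_iff {a : G1.V} {b : G2.V} :
    Sum.inl a = vertexIdentInr u1 u2 b ↔ a = u1 ∧ b = u2 := by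
  unfold vertexIdentInr
  split_ifs <;> simp_all

variable (G1 G2 u1 u2)

noncomputable def vertexIdentEmbLeft : MEmb G1 (vertexIdent G1 G2 u1 u2) :=
  ⟨.inl, .inl, fun _ => rfl⟩

noncomputable def vertexIdentEmbRight : MEmb G2 (vertexIdent G1 G2 u1 u2) :=
  ⟨⟨vertexIdentInr u1 u2, vertexIdentInr_injective⟩, .inr, fun _ => rfl⟩

variable {G1 G2 u1 u2}

theorem vertexIdent_separates :
    ∀ v ≠ Sum.inl u1, ∀ x ∈ Set.range Sum.inl, ∀ y ∉ Set.range Sum.inl,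
      v ∈ (vertexIdent G1 G2 u1 u2).ends x → v ∉ (vertexIdent G1 G2 u1 u2).ends y := by
  rintro v hv _ ⟨e, rfl⟩ y hy hve hvy
  obtain ⟨g, rfl⟩ : y ∈ Set.range Sum.inr := Set.compl_range_inl ▸ hy
  obtain ⟨a, -, rfl⟩ := Sym2.mem_map.1 hve
  obtain ⟨b, -, hb⟩ := Sym2.mem_map.1 hvy
  exact hv (congrArg Sum.inl (inl_eq_vertexIdentInr_iff.1 hb.symm).1)

theorem decompSizes_vertexIdent :
    (vertexIdent G1 G2 u1 u2).decompSizes Set.univ =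
      G1.decompSizes Set.univ + G2.decompSizes Set.univ := by
  rw [decompSizes_eq_add Set.univ (Set.range Sum.inl) fun C hC =>
      hC.subset_or_subset_compl vertexIdent_separates,
    Set.univ_inter, ← Set.compl_eq_univ_sdiff]
  have hleft := (vertexIdentEmbLeft G1 G2 u1 u2).decompSizes_image Set.univ
  have hright := (vertexIdentEmbRight G1 G2 u1 u2).decompSizes_image Set.univ
  rw [Set.image_univ] at hleft hright
  rw [← hleft, ← hright]
  congr 2
  exact Set.compl_range_inl

end MGraph

/-- cycle numbers under vertex-identification. -/
theorem cycle_numbers_vertexIdent (G1 G2 : MGraph)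
    (hE1 : G1.IsEulerian) (hE2 : G2.IsEulerian) (u1 : G1.V) (u2 : G2.V) :
    (MGraph.vertexIdent G1 G2 u1 u2).c = G1.c + G2.c ∧
    (MGraph.vertexIdent G1 G2 u1 u2).nu = G1.nu + G2.nu := by
  have hsizes := MGraph.decompSizes_vertexIdent (u1 := u1) (u2 := u2)
  obtain ⟨D₁, hD₁⟩ := hE1.exists_isCycleDecomp
  obtain ⟨D₂, hD₂⟩ := hE2.exists_isCycleDecomp
  have hne₁ : (G1.decompSizes Set.univ).Nonempty := ⟨_, D₁, hD₁, rfl⟩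
  have hne₂ : (G2.decompSizes Set.univ).Nonempty := ⟨_, D₂, hD₂, rfl⟩
  exact ⟨(congrArg sInf hsizes).trans (Nat.csInf_add hne₁ hne₂),
    (congrArg sSup hsizes).trans (Nat.csSup_add hne₁ (MGraph.bddAbove_decompSizes _) hne₂
      (MGraph.bddAbove_decompSizes _))⟩
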